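/- arXiv:2505.19227 — 2 statements merged into one kernel-verified Lean document; each statement's English description precedes it below -/
import Mathlib

section
/- Fix a real α > 1. For an integer d ≥ 1, an integer t ≥ 0 and H_{d,α} = Σ_{k=1}^d k^{−α}, define r_d(t) = (1/H_{d,α}) · Σ_{k=1}^d k^{−α}(1 − k^{−α})^{2t}, and define r_∞(t) = (1/ζ(α)) · Σ_{k=1}^∞ k^{−α}(1 − k^{−α})^{2t}. Then: (i) for every integer t ≥ 0, lim_{d→∞} r_d(t) = r_∞(t); and (ii) lim_{t→∞} r_∞(t) · α·ζ(α) / B(1 − 1/α, 1 + 2t) = 1, where B is the Beta function and ζ the Riemann zeta function. -/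
/-!
The summand `u (1 - u)^n` at `u = k^(-α)` is unimodal in `k`, with maximum at most
`1/(n+1)`, so the series differs from `∫_1^∞ x^(-α) (1 - x^(-α))^n dx` by at most `2/(n+1)`.
The substitution `z = x^(-α)` turns this integral into `B(1 - 1/α, n + 1) / α`, and
Bernoulli's inequality on `[0, 1/(2n)]` gives `B(1 - 1/α, n + 1) ≥ c n^(1/α - 1)`. Hence the
relative error is `O(n^(-1/α))`. Part (i) only uses `ζ(α) = Σ k^(-α)` and the convergence of
both series.
-/

open Filter Set MeasureTheory Topology

theorem tsum_nat_add_eq_sum_Ico_add_tsum {G : Type*} [AddCommGroup G] [TopologicalSpace G]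
    [IsTopologicalAddGroup G] [T2Space G] {f : ℕ → G} (hf : Summable f) {a m : ℕ}
    (ham : a ≤ m) :
    ∑' k, f (k + a) = ∑ k ∈ Finset.Ico a m, f k + ∑' k, f (k + m) := by
  have head := hf.sum_add_tsum_nat_add a
  have tail := hf.sum_add_tsum_nat_add m
  rw [← Finset.sum_range_add_sum_Ico f ham, ← head, add_assoc] at tail
  exact (add_left_cancel tail).symm

theorem MonotoneOn.integral_le_sum_Ico_add_sub {f : ℝ → ℝ} {a b : ℕ} (hab : a ≤ b)
    (hf : MonotoneOn f (Icc a b)) :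
    ∫ x in (a : ℝ)..b, f x ≤ ∑ k ∈ Finset.Ico a b, f k + (f b - f a) := by
  have telescope := Finset.sum_Ico_sub (fun k : ℕ => f k) hab
  rw [Finset.sum_sub_distrib] at telescope
  linarith [hf.integral_le_sum_Ico hab]

theorem AntitoneOn.tsum_comp_add_le_add_integral {f : ℝ → ℝ} (N : ℕ)
    (anti : AntitoneOn f (Ici N)) (integrable : IntegrableOn f (Ioi N))
    (nonneg : ∀ x ∈ Ioi (N : ℝ), 0 ≤ f x) :
    ∑' k : ℕ, f (k + N : ℕ) ≤ f N + ∫ x in Ioi (N : ℝ), f x := by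
  have summable := anti.summable_of_integrableOn_Ioi integrable nonneg
  rw [((summable_nat_add_iff N).mpr summable).tsum_eq_zero_add]
  simp only [zero_add, add_right_comm _ 1]
  linarith [anti.tsum_comp_add_le_integral N integrable nonneg]

/- Left sums trail the integral by at most `f m - f a` on the increasing part `[a, m]` and lead
it by at most `f (m + 1)` on the decreasing part `[m + 1, ∞)`; the peak interval `[m, m + 1]`
contributes at most `M`. -/
theorem abs_tsum_sub_integral_le_of_unimodal {f : ℝ → ℝ} {a m : ℕ} {M : ℝ} (ham : a ≤ m)
    (mono : MonotoneOn f (Icc a m)) (anti : AntitoneOn f (Ici ((m + 1 : ℕ) : ℝ)))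
    (nonneg : ∀ x ∈ Ici (a : ℝ), 0 ≤ f x) (bdd : ∀ x ∈ Icc (m : ℝ) (m + 1), f x ≤ M)
    (integrable : IntegrableOn f (Ioi (a : ℝ))) :
    |∑' k : ℕ, f (k + a : ℕ) - ∫ x in Ioi (a : ℝ), f x| ≤ 2 * M := by
  have ham' : (a : ℝ) ≤ m := by exact_mod_cast ham
  have hm : (m : ℝ) ≤ (m + 1 : ℕ) := by push_cast; linarith
  have nonneg_tail (x : ℝ) (hx : x ∈ Ioi ((m + 1 : ℕ) : ℝ)) : 0 ≤ f x :=
    nonneg x (ham'.trans (hm.trans (le_of_lt hx)))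
  have integrable_tail : IntegrableOn f (Ioi ((m + 1 : ℕ) : ℝ)) :=
    integrable.mono_set (Ioi_subset_Ioi (ham'.trans hm))
  have summable := anti.summable_of_integrableOn_Ioi integrable_tail nonneg_tail
  have interval_integrable {b c : ℝ} (hb : (a : ℝ) ≤ b) (hbc : b ≤ c) :
      IntervalIntegrable f volume b c :=
    (intervalIntegrable_iff_integrableOn_Ioc_of_le hbc).mpr
      (integrable.mono_set (Ioc_subset_Ioi_self.trans (Ioi_subset_Ioi hb)))
  have split_sum : ∑' k : ℕ, f (k + a : ℕ)
      = ∑ k ∈ Finset.Ico a m, f k + f m + ∑' k : ℕ, f (k + (m + 1) : ℕ) := by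
    rw [tsum_nat_add_eq_sum_Ico_add_tsum summable (ham.trans m.le_succ),
      Finset.sum_Ico_succ_top ham]
  have split_integral : ∫ x in Ioi (a : ℝ), f x
      = (∫ x in (a : ℝ)..m, f x) + (∫ x in (m : ℝ)..(m + 1 : ℕ), f x)
        + ∫ x in Ioi ((m + 1 : ℕ) : ℝ), f x := by
    rw [intervalIntegral.integral_add_adjacent_intervals (interval_integrable le_rfl ham')
      (interval_integrable ham' hm), intervalIntegral.integral_interval_add_Ioi'
      (interval_integrable le_rfl (ham'.trans hm)) integrable_tail]
  have middle_le : ∫ x in (m : ℝ)..(m + 1 : ℕ), f x ≤ M := by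
    simpa using intervalIntegral.integral_mono_on hm (interval_integrable ham' hm)
      intervalIntegrable_const fun x hx => bdd x (by simpa using hx)
  have middle_nonneg : 0 ≤ ∫ x in (m : ℝ)..(m + 1 : ℕ), f x :=
    intervalIntegral.integral_nonneg hm fun x hx => nonneg x (ham'.trans hx.1)
  have head_le := mono.sum_le_integral_Ico ham
  have le_head := mono.integral_le_sum_Ico_add_sub ham
  have tail_le := anti.tsum_comp_add_le_add_integral (m + 1) integrable_tail nonneg_tail
  have le_tail := anti.integral_le_tsum_comp_add (m + 1) summable nonneg_tail
  have f_a := nonneg a self_mem_Ici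
  have f_m := bdd m ⟨le_rfl, by linarith⟩
  have f_m_succ := bdd (m + 1 : ℕ) ⟨hm, by push_cast; rfl⟩
  rw [split_sum, split_integral, abs_le]
  constructor <;> linarith

theorem tendsto_sum_Icc_one {M : Type*} [AddCommMonoid M] [TopologicalSpace M] {f : ℕ → M}
    (hf : Summable fun k => f (k + 1)) :
    Tendsto (fun d => ∑ k ∈ Finset.Icc 1 d, f k) atTop (𝓝 (∑' k, f (k + 1))) := by
  refine hf.hasSum.tendsto_sum_nat.congr fun d => ?_
  rw [Finset.range_eq_Ico, Finset.sum_Ico_add' f 0 d 1, zero_add,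
    Finset.Ico_add_one_right_eq_Icc]

theorem hasDerivAt_mul_one_sub_pow_succ (n : ℕ) (u : ℝ) :
    HasDerivAt (fun u : ℝ => u * (1 - u) ^ (n + 1)) ((1 - u) ^ n * (1 - (n + 2) * u)) u :=
  ((hasDerivAt_id' u).mul (((hasDerivAt_id' u).const_sub 1).pow (n + 1))).congr_deriv
    (by simp only [Pi.pow_apply]; push_cast; ring)

theorem monotoneOn_mul_one_sub_pow (n : ℕ) :
    MonotoneOn (fun u : ℝ => u * (1 - u) ^ n) (Icc 0 (n + 1 : ℝ)⁻¹) := by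
  cases n with
  | zero => exact fun _ _ _ _ h => by simpa using h
  | succ n =>
    refine monotoneOn_of_hasDerivWithinAt_nonneg (convex_Icc _ _) (by fun_prop)
      (fun u _ => (hasDerivAt_mul_one_sub_pow_succ n u).hasDerivWithinAt) fun u hu => ?_
    rw [interior_Icc, mem_Ioo, Nat.cast_succ, add_assoc, one_add_one_eq_two,
      ← one_div, lt_div_iff₀ (by positivity)] at hu
    have : 0 ≤ 1 - u := by nlinarith
    exact mul_nonneg (pow_nonneg this n) (by linarith)

theorem antitoneOn_mul_one_sub_pow (n : ℕ) :
    AntitoneOn (fun u : ℝ => u * (1 - u) ^ n) (Icc (n + 1 : ℝ)⁻¹ 1) := by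
  cases n with
  | zero => simp
  | succ n =>
    refine antitoneOn_of_hasDerivWithinAt_nonpos (convex_Icc _ _) (by fun_prop)
      (fun u _ => (hasDerivAt_mul_one_sub_pow_succ n u).hasDerivWithinAt) fun u hu => ?_
    rw [interior_Icc, mem_Ioo, Nat.cast_succ, add_assoc, one_add_one_eq_two,
      ← one_div, div_lt_iff₀ (by positivity)] at hu
    exact mul_nonpos_of_nonneg_of_nonpos (pow_nonneg (by linarith) n) (by linarith)

theorem mul_one_sub_pow_mem_Icc (n : ℕ) {u : ℝ} (hu : u ∈ Icc 0 1) :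
    u * (1 - u) ^ n ∈ Icc 0 u :=
  ⟨mul_nonneg hu.1 (pow_nonneg (by linarith [hu.2]) n),
    mul_le_of_le_one_right hu.1 (pow_le_one₀ (by linarith [hu.2]) (by linarith [hu.1]))⟩

theorem mul_one_sub_pow_le (n : ℕ) {u : ℝ} (hu : u ∈ Icc 0 1) :
    u * (1 - u) ^ n ≤ (n + 1 : ℝ)⁻¹ := by
  have peak : (n + 1 : ℝ)⁻¹ ∈ Icc 0 1 :=
    ⟨by positivity, inv_le_one_of_one_le₀ (by linarith [n.cast_nonneg (α := ℝ)])⟩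
  refine le_trans ?_ (mul_one_sub_pow_mem_Icc n peak).2
  rcases le_total u (n + 1 : ℝ)⁻¹ with h | h
  · exact monotoneOn_mul_one_sub_pow n ⟨hu.1, h⟩ ⟨peak.1, le_rfl⟩ h
  · exact antitoneOn_mul_one_sub_pow n ⟨le_rfl, peak.2⟩ ⟨h, hu.2⟩ h

theorem le_integral_rpow_mul_one_sub_pow {β : ℝ} (hβ : β < 1) {n : ℕ} (hn : n ≠ 0) :
    (2 * n : ℝ) ^ β / (4 * n * (1 - β)) ≤ ∫ z in (0 : ℝ)..1, z ^ (-β) * (1 - z) ^ n := by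
  have hn' : (1 : ℝ) ≤ n := by exact_mod_cast Nat.one_le_iff_ne_zero.mpr hn
  set c : ℝ := (2 * n)⁻¹
  have hc0 : 0 < c := by positivity
  have hc1 : c ≤ 1 := inv_le_one_of_one_le₀ (by linarith)
  have rpow_integrable (a b : ℝ) : IntervalIntegrable (fun z : ℝ => z ^ (-β)) volume a b :=
    intervalIntegral.intervalIntegrable_rpow' (by linarith)
  have integrable (a b : ℝ) :
      IntervalIntegrable (fun z : ℝ => z ^ (-β) * (1 - z) ^ n) volume a b :=
    (rpow_integrable a b).mul_continuousOn (by fun_prop)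
  have head :
      ∫ z in (0 : ℝ)..c, z ^ (-β) / 2 ≤ ∫ z in (0 : ℝ)..c, z ^ (-β) * (1 - z) ^ n := by
    refine intervalIntegral.integral_mono_on hc0.le ((rpow_integrable 0 c).div_const 2)
      (integrable 0 c) fun z hz => ?_
    have bernoulli := one_add_mul_le_pow (a := -z) (by linarith [hz.2]) n
    rw [← sub_eq_add_neg] at bernoulli
    have nz_le_half : (n : ℝ) * z ≤ 1 / 2 := by
      calc (n : ℝ) * z ≤ n * c := by gcongr; exact hz.2
        _ = 1 / 2 := by simp only [c]; field_simp
    rw [div_eq_mul_one_div]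
    exact mul_le_mul_of_nonneg_left (by linarith) (Real.rpow_nonneg hz.1 _)
  have tail : 0 ≤ ∫ z in c..1, z ^ (-β) * (1 - z) ^ n :=
    intervalIntegral.integral_nonneg hc1 fun z hz =>
      mul_nonneg (Real.rpow_nonneg (hc0.le.trans hz.1) _) (pow_nonneg (by linarith [hz.2]) n)
  have head_eq :
      ∫ z in (0 : ℝ)..c, z ^ (-β) / 2 = (2 * n : ℝ) ^ β / (4 * n * (1 - β)) := by
    rw [intervalIntegral.integral_div, integral_rpow (Or.inl (by linarith)),
      Real.zero_rpow (by linarith), sub_zero, Real.inv_rpow (by positivity),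
      Real.rpow_add_one (by positivity), Real.rpow_neg (by positivity), neg_add_eq_sub]
    have : 1 - β ≠ 0 := by linarith
    field_simp
    ring
  rw [← intervalIntegral.integral_add_adjacent_intervals (integrable 0 c) (integrable c 1)]
  linarith

section PowerLaw

variable {α : ℝ}

theorem rpow_neg_mem_Icc (hα : 0 ≤ α) {x : ℝ} (hx : 1 ≤ x) : x ^ (-α) ∈ Icc (0 : ℝ) 1 :=
  ⟨Real.rpow_nonneg (by linarith) _, Real.rpow_le_one_of_one_le_of_nonpos hx (by linarith)⟩

theorem summable_nat_add_one_rpow_neg (hα : 1 < α) :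
    Summable fun k : ℕ => ((k : ℝ) + 1) ^ (-α) := by
  simpa using (summable_nat_add_iff 1).mpr (Real.summable_nat_rpow.mpr (neg_lt_neg hα))

theorem summable_rpow_neg_mul_one_sub_pow (hα : 1 < α) (n : ℕ) :
    Summable fun k : ℕ => ((k : ℝ) + 1) ^ (-α) * (1 - ((k : ℝ) + 1) ^ (-α)) ^ n := by
  have bounds (k : ℕ) := mul_one_sub_pow_mem_Icc n
    (rpow_neg_mem_Icc (α := α) (by linarith) (le_add_of_nonneg_left k.cast_nonneg))
  exact (summable_nat_add_one_rpow_neg hα).of_nonneg_of_le (fun k => (bounds k).1)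
    (fun k => (bounds k).2)

theorem riemannZeta_re_eq_tsum (hα : 1 < α) :
    (riemannZeta α).re = ∑' k : ℕ, ((k : ℝ) + 1) ^ (-α) := by
  rw [zeta_eq_tsum_one_div_nat_add_one_cpow (by simpa using hα),
    ← Complex.ofReal_re (∑' _, _), Complex.ofReal_tsum]
  congr 2 with k
  rw [Real.rpow_neg (by positivity), Complex.ofReal_inv, Complex.ofReal_cpow (by positivity)]
  push_cast
  ring

theorem riemannZeta_re_pos (hα : 1 < α) : 0 < (riemannZeta α).re := by
  rw [riemannZeta_re_eq_tsum hα]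
  exact (summable_nat_add_one_rpow_neg hα).tsum_pos (fun k => by positivity) 0 (by positivity)

theorem integrableOn_rpow_neg_mul_one_sub_pow (hα : 1 < α) (n : ℕ) :
    IntegrableOn (fun x : ℝ => x ^ (-α) * (1 - x ^ (-α)) ^ n) (Ioi 1) := by
  refine (integrableOn_Ioi_rpow_of_lt (neg_lt_neg hα) one_pos).mono' (by fun_prop) ?_
  filter_upwards [ae_restrict_mem measurableSet_Ioi] with x hx
  have bounds := mul_one_sub_pow_mem_Icc n (rpow_neg_mem_Icc (by linarith) (le_of_lt hx))
  rw [Real.norm_of_nonneg bounds.1]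
  exact bounds.2

theorem rpow_inv_rpow_neg {x : ℝ} (hx : 0 ≤ x) (hα : α ≠ 0) : (x ^ α⁻¹) ^ (-α) = x⁻¹ := by
  rw [Real.rpow_neg (by positivity), Real.rpow_inv_rpow hx hα]

theorem monotoneOn_rpow_neg_mul_one_sub_pow (hα : 0 < α) (n : ℕ) :
    MonotoneOn (fun x : ℝ => x ^ (-α) * (1 - x ^ (-α)) ^ n) (Icc 1 ((n + 1 : ℝ) ^ α⁻¹)) := by
  have rpow_anti := Real.antitoneOn_rpow_Ioi_of_exponent_nonpos (neg_nonpos.mpr hα.le)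
  have pos {x : ℝ} (hx : x ∈ Icc 1 ((n + 1 : ℝ) ^ α⁻¹)) : x ∈ Ioi 0 :=
    zero_lt_one.trans_le hx.1
  refine (antitoneOn_mul_one_sub_pow n).comp (rpow_anti.mono fun x => pos)
    fun x hx => ⟨?_, (rpow_neg_mem_Icc hα.le hx.1).2⟩
  rw [← rpow_inv_rpow_neg (by positivity) hα.ne']
  exact rpow_anti (pos hx) (pos ⟨hx.1.trans hx.2, le_rfl⟩) hx.2

theorem antitoneOn_rpow_neg_mul_one_sub_pow (hα : 0 < α) (n : ℕ) :
    AntitoneOn (fun x : ℝ => x ^ (-α) * (1 - x ^ (-α)) ^ n) (Ici ((n + 1 : ℝ) ^ α⁻¹)) := by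
  have rpow_anti := Real.antitoneOn_rpow_Ioi_of_exponent_nonpos (neg_nonpos.mpr hα.le)
  have one_le_peak : 1 ≤ (n + 1 : ℝ) ^ α⁻¹ :=
    Real.one_le_rpow (by linarith [n.cast_nonneg (α := ℝ)]) (by positivity)
  have pos {x : ℝ} (hx : x ∈ Ici ((n + 1 : ℝ) ^ α⁻¹)) : x ∈ Ioi 0 :=
    zero_lt_one.trans_le (one_le_peak.trans hx)
  refine (monotoneOn_mul_one_sub_pow n).comp_AntitoneOn (rpow_anti.mono fun x => pos)
    fun x hx => ⟨(rpow_neg_mem_Icc hα.le (one_le_peak.trans hx)).1, ?_⟩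
  rw [← rpow_inv_rpow_neg (by positivity) hα.ne']
  exact rpow_anti (pos self_mem_Ici) (pos hx) hx

theorem abs_tsum_sub_integral_rpow_neg_mul_one_sub_pow_le (hα : 1 < α) (n : ℕ) :
    |∑' k : ℕ, ((k : ℝ) + 1) ^ (-α) * (1 - ((k : ℝ) + 1) ^ (-α)) ^ n
      - ∫ x in Ioi 1, x ^ (-α) * (1 - x ^ (-α)) ^ n| ≤ 2 * (n + 1 : ℝ)⁻¹ := by
  set peak : ℝ := (n + 1 : ℝ) ^ α⁻¹
  have one_le_peak : 1 ≤ peak :=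
    Real.one_le_rpow (by linarith [n.cast_nonneg (α := ℝ)]) (by positivity)
  set m := ⌊peak⌋₊
  have one_le_m : 1 ≤ m := Nat.le_floor (by simpa using one_le_peak)
  have one_le_m' : (1 : ℝ) ≤ m := by exact_mod_cast one_le_m
  have m_le_peak : (m : ℝ) ≤ peak := Nat.floor_le (by linarith)
  have peak_le_m : peak ≤ ((m + 1 : ℕ) : ℝ) := by
    push_cast; exact (Nat.lt_floor_add_one peak).le
  simpa using abs_tsum_sub_integral_le_of_unimodal one_le_m
    ((monotoneOn_rpow_neg_mul_one_sub_pow (by linarith) n).mono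
      (Icc_subset_Icc (by simp) m_le_peak))
    ((antitoneOn_rpow_neg_mul_one_sub_pow (by linarith) n).mono (Ici_subset_Ici.mpr peak_le_m))
    (fun x hx => (mul_one_sub_pow_mem_Icc n (rpow_neg_mem_Icc (by linarith) (by simpa using hx))).1)
    (fun x hx => mul_one_sub_pow_le n (rpow_neg_mem_Icc (by linarith) (one_le_m'.trans hx.1)))
    (by simpa using integrableOn_rpow_neg_mul_one_sub_pow hα n)

theorem image_rpow_neg_Ioi_one (hα : 0 < α) : (fun x : ℝ => x ^ (-α)) '' Ioi 1 = Ioo 0 1 := by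
  ext z
  constructor
  · rintro ⟨x, hx, rfl⟩
    exact ⟨Real.rpow_pos_of_pos (zero_lt_one.trans hx) _,
      Real.rpow_lt_one_of_one_lt_of_neg hx (by linarith)⟩
  · rintro ⟨hz0, hz1⟩
    refine ⟨z ^ (-α)⁻¹, Real.one_lt_rpow_of_pos_of_lt_one_of_neg hz0 hz1 (by simpa using hα), ?_⟩
    exact Real.rpow_inv_rpow hz0.le (by linarith)

theorem integral_Ioo_zero_one_eq_integral_Ioi_one (hα : 0 < α) (g : ℝ → ℝ) :
    ∫ z in Ioo 0 1, g z = ∫ x in Ioi 1, α * x ^ (-α - 1) * g (x ^ (-α)) := by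
  have deriv (x : ℝ) (hx : x ∈ Ioi 1) :
      HasDerivWithinAt (fun x : ℝ => x ^ (-α)) (-α * x ^ (-α - 1)) (Ioi 1) x :=
    (Real.hasDerivAt_rpow_const (Or.inl (by linarith [mem_Ioi.mp hx]))).hasDerivWithinAt
  have inj : InjOn (fun x : ℝ => x ^ (-α)) (Ioi 1) :=
    (Real.rpow_left_injOn (neg_ne_zero.mpr hα.ne')).mono
      fun x (hx : 1 < x) => (zero_lt_one.trans hx).le
  rw [← image_rpow_neg_Ioi_one hα,
    integral_image_eq_integral_abs_deriv_smul measurableSet_Ioi deriv inj]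
  refine setIntegral_congr_fun measurableSet_Ioi fun x hx => ?_
  rw [smul_eq_mul, abs_mul, abs_neg, abs_of_pos hα,
    abs_of_pos (Real.rpow_pos_of_pos (zero_lt_one.trans hx) _)]

theorem integral_rpow_mul_one_sub_pow_eq (hα : 0 < α) (n : ℕ) :
    ∫ z in (0 : ℝ)..1, z ^ (-α⁻¹) * (1 - z) ^ n
      = α * ∫ x in Ioi 1, x ^ (-α) * (1 - x ^ (-α)) ^ n := by
  rw [intervalIntegral.integral_of_le zero_le_one, integral_Ioc_eq_integral_Ioo,
    integral_Ioo_zero_one_eq_integral_Ioi_one hα, ← integral_const_mul]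
  refine setIntegral_congr_fun measurableSet_Ioi fun x hx => ?_
  have hx0 : 0 < x := zero_lt_one.trans hx
  rw [← Real.rpow_mul hx0.le, neg_mul_neg, mul_inv_cancel₀ hα.ne', Real.rpow_one,
    Real.rpow_sub_one hx0.ne']
  field_simp

theorem tendsto_tsum_div_integral_rpow_neg_mul_one_sub_pow (hα : 1 < α) :
    Tendsto (fun n : ℕ =>
      (∑' k : ℕ, ((k : ℝ) + 1) ^ (-α) * (1 - ((k : ℝ) + 1) ^ (-α)) ^ n) /
        ∫ x in Ioi 1, x ^ (-α) * (1 - x ^ (-α)) ^ n) atTop (𝓝 1) := by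
  have lower {n : ℕ} (hn : n ≠ 0) : (2 * n : ℝ) ^ α⁻¹ / (4 * n * (α - 1))
      ≤ ∫ x in Ioi 1, x ^ (-α) * (1 - x ^ (-α)) ^ n := by
    have := le_integral_rpow_mul_one_sub_pow (inv_lt_one_of_one_lt₀ hα) hn
    have hn' : (n : ℝ) ≠ 0 := by exact_mod_cast hn
    have hα' : α - 1 ≠ 0 := by linarith
    rw [integral_rpow_mul_one_sub_pow_eq (by linarith) n,
      show (2 * n : ℝ) ^ α⁻¹ / (4 * n * (1 - α⁻¹))
        = α * ((2 * n : ℝ) ^ α⁻¹ / (4 * n * (α - 1))) by field_simp] at this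
    exact le_of_mul_le_mul_left this (by linarith)
  have error {n : ℕ} (hn : n ≠ 0) :
      ‖(∑' k : ℕ, ((k : ℝ) + 1) ^ (-α) * (1 - ((k : ℝ) + 1) ^ (-α)) ^ n) /
        (∫ x in Ioi 1, x ^ (-α) * (1 - x ^ (-α)) ^ n) - 1‖
        ≤ 8 * (α - 1) / (2 * n : ℝ) ^ α⁻¹ := by
    have hn' : (0 : ℝ) < n := by exact_mod_cast Nat.pos_of_ne_zero hn
    have hy : 0 < (2 * n : ℝ) ^ α⁻¹ := by positivity
    have hα1 : 0 < α - 1 := by linarith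
    have hI := lower hn
    have hIpos := (div_pos hy (by positivity)).trans_le hI
    rw [Real.norm_eq_abs, div_sub_one hIpos.ne', abs_div, abs_of_pos hIpos, div_le_iff₀ hIpos]
    calc _ ≤ 2 * (n + 1 : ℝ)⁻¹ := abs_tsum_sub_integral_rpow_neg_mul_one_sub_pow_le hα n
      _ ≤ 2 / n := by rw [div_eq_mul_inv]; gcongr; linarith
      _ = 8 * (α - 1) / (2 * n : ℝ) ^ α⁻¹ * ((2 * n : ℝ) ^ α⁻¹ / (4 * n * (α - 1))) := by
        field_simp
        ring
      _ ≤ _ := by gcongr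
  have decay : Tendsto (fun n : ℕ => 8 * (α - 1) / (2 * n : ℝ) ^ α⁻¹) atTop (𝓝 0) :=
    tendsto_const_nhds.div_atTop ((tendsto_rpow_atTop (by positivity)).comp
      (tendsto_natCast_atTop_atTop.const_mul_atTop two_pos))
  rw [tendsto_iff_norm_sub_tendsto_zero]
  exact squeeze_zero' (.of_forall fun _ => norm_nonneg _)
    ((eventually_ne_atTop 0).mono fun n hn => error hn) decay

end PowerLaw

/-- α > 1 case of the gradient-descent scaling law: for each fixed integer `t`,
`r_d(t) → r_∞(t)` as `d → ∞`, and `r_∞(t)` is asymptotically equivalent to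
`B(1 − 1/α, 1 + 2t)/(α ζ(α))` as `t → ∞`. -/
theorem stmt10 (α : ℝ) (hα : 1 < α) :
    let H : ℕ → ℝ := fun d => ∑ k ∈ Finset.Icc 1 d, (k : ℝ) ^ (-α)
    let r : ℕ → ℕ → ℝ := fun d t =>
      (∑ k ∈ Finset.Icc 1 d, (k : ℝ) ^ (-α) * (1 - (k : ℝ) ^ (-α)) ^ (2 * t)) / H d
    let rinf : ℕ → ℝ := fun t =>
      (∑' k : ℕ, ((k : ℝ) + 1) ^ (-α) * (1 - ((k : ℝ) + 1) ^ (-α)) ^ (2 * t)) /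
        (riemannZeta (α : ℂ)).re
    (∀ t : ℕ, Tendsto (fun d : ℕ => r d t) atTop (nhds (rinf t))) ∧
    Tendsto
      (fun t : ℕ => rinf t * (α * (riemannZeta (α : ℂ)).re) /
        (∫ z in (0 : ℝ)..1, z ^ ((1 - 1 / α) - 1) * (1 - z) ^ ((1 + 2 * (t : ℝ)) - 1)))
      atTop (nhds 1) := by
  intro H r rinf
  have zeta_pos := riemannZeta_re_pos hα
  refine ⟨fun t => ?_, ?_⟩
  · have numerator :=
      tendsto_sum_Icc_one (f := fun k : ℕ => (k : ℝ) ^ (-α) * (1 - (k : ℝ) ^ (-α)) ^ (2 * t))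
        (by simpa using summable_rpow_neg_mul_one_sub_pow hα (2 * t))
    have denominator := tendsto_sum_Icc_one (f := fun k : ℕ => (k : ℝ) ^ (-α))
      (by simpa using summable_nat_add_one_rpow_neg hα)
    push_cast at numerator denominator
    rw [← riemannZeta_re_eq_tsum hα] at denominator
    exact numerator.div denominator zeta_pos.ne'
  · have beta (t : ℕ) :
        ∫ z in (0 : ℝ)..1, z ^ ((1 - 1 / α) - 1) * (1 - z) ^ ((1 + 2 * (t : ℝ)) - 1)
          = α * ∫ x in Ioi 1, x ^ (-α) * (1 - x ^ (-α)) ^ (2 * t) := by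
      rw [← integral_rpow_mul_one_sub_pow_eq (by linarith)]
      congr with z
      rw [show (1 + 2 * (t : ℝ)) - 1 = ((2 * t : ℕ) : ℝ) by push_cast; ring, Real.rpow_natCast]
      ring_nf
    refine ((tendsto_tsum_div_integral_rpow_neg_mul_one_sub_pow hα).comp
      (tendsto_id.const_mul_atTop' two_pos)).congr fun t => ?_
    have : α ≠ 0 := by linarith
    simp only [Function.comp, id, rinf, beta]
    field_simp
end

section
/- Fix a real α > 1/2 and a real τ > 0 with τ²·(2^α − 1) > 1. For an integer d ≥ 2, a real T > 0 and a real φ ∈ [1, d], define r_d(T, φ) = ( Σ_{k=1}^{⌊φ⌋} (k^{−α} − φ^{−α})² + Σ_{k=⌊φ⌋+1}^{d} φ^{−2α}/(4T²) ) / Σ_{k=1}^{d} k^{−2α}. Then, with T_d = (τ/2)·√d and φ_τ = (1 + 1/τ²)^{1/α}, one has lim_{d→∞} r_d(T_d, φ_τ) = 1 / ( ζ(2α)·(1 + τ²) ), where ζ is the Riemann zeta function. -/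
/-!
Since `τ²(2^α - 1) > 1`, the step parameter `φ_τ` lies in `(1, 2)`, so `⌊φ_τ⌋ = 1` and
`x := φ_τ^{-α} = 1 / (1 + 1/τ²)`. With `4 T_d² = τ² d` the numerator of `r_d` equals
`(1 - x)² + (1 - 1/d) x²/τ²`, which tends to `(1 - x)² + x²/τ² = 1/(1 + τ²)`, while the
denominator is a partial sum of the series `ζ(2α) = ∑ k^{-2α}`, convergent because `2α > 1`.
-/

open Filter Finset Real

theorem hasSum_nat_rpow_neg_riemannZeta_re {s : ℝ} (hs : 1 < s) :
    HasSum (fun n : ℕ => (n : ℝ) ^ (-s)) (riemannZeta s).re := by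
  have hs' : 1 < (s : ℂ).re := by simpa using hs
  have h := (Complex.summable_one_div_nat_cpow.mpr hs').hasSum
  rw [← zeta_eq_tsum_one_div_nat_cpow hs'] at h
  convert Complex.hasSum_re h using 2 with n
  rw [← Complex.ofReal_natCast, ← Complex.ofReal_cpow n.cast_nonneg, ← Complex.ofReal_one,
    ← Complex.ofReal_div, Complex.ofReal_re, rpow_neg n.cast_nonneg, one_div]

theorem tendsto_sum_Icc_rpow_neg_riemannZeta_re {s : ℝ} (hs : 1 < s) :
    Tendsto (fun d : ℕ => ∑ k ∈ Icc 1 d, (k : ℝ) ^ (-s)) atTop (nhds (riemannZeta s).re) := by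
  refine ((hasSum_nat_rpow_neg_riemannZeta_re hs).tendsto_sum_nat.comp
    (tendsto_add_atTop_nat 1)).congr fun d => ?_
  rw [Function.comp_apply, Nat.range_succ_eq_Icc_zero, ← insert_Icc_add_one_left_eq_Icc d.zero_le,
    sum_insert (by simp), Nat.cast_zero, zero_rpow (by linarith), zero_add, zero_add]

theorem floor_rpow_one_div_eq_one {α B : ℝ} (hα : 0 < α) (hB : 1 ≤ B) (hB2 : B < 2 ^ α) :
    ⌊B ^ (1 / α)⌋₊ = 1 := by
  rw [Nat.floor_eq_iff (by positivity), Nat.cast_one, one_add_one_eq_two]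
  refine ⟨one_le_rpow hB (by positivity), ?_⟩
  calc B ^ (1 / α) < (2 ^ α) ^ (1 / α) := by gcongr
    _ = 2 := by rw [one_div, rpow_rpow_inv zero_le_two hα.ne']

theorem rpow_one_div_rpow_neg {α B : ℝ} (hα : α ≠ 0) (hB : 0 ≤ B) :
    (B ^ (1 / α)) ^ (-α) = B⁻¹ := by
  rw [rpow_neg (by positivity), one_div, rpow_inv_rpow hB hα]

/-- The paper's `r_d(T, φ)`. -/
noncomputable def signDescentLoss (α : ℝ) (d : ℕ) (T φ : ℝ) : ℝ :=
  ((∑ k ∈ Icc 1 ⌊φ⌋₊, ((k : ℝ) ^ (-α) - φ ^ (-α)) ^ 2) +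
    ∑ _k ∈ Icc (⌊φ⌋₊ + 1) d, φ ^ (-(2 * α)) / (4 * T ^ 2)) /
  ∑ k ∈ Icc 1 d, (k : ℝ) ^ (-(2 * α))

theorem signDescentLoss_of_floor_eq_one {α T φ : ℝ} {d : ℕ} (hφ : ⌊φ⌋₊ = 1) (hd : 1 ≤ d) :
    signDescentLoss α d T φ =
      ((1 - φ ^ (-α)) ^ 2 + (d - 1) * (φ ^ (-α)) ^ 2 / (4 * T ^ 2)) /
        ∑ k ∈ Icc 1 d, (k : ℝ) ^ (-(2 * α)) := by
  have hφ0 : 0 ≤ φ := zero_le_one.trans (Nat.one_le_floor_iff φ |>.mp hφ.ge)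
  have hsq : φ ^ (-(2 * α)) = (φ ^ (-α)) ^ 2 := by
    rw [← rpow_natCast, ← rpow_mul hφ0]
    ring_nf
  have hcard : ((Icc 2 d).card : ℝ) = d - 1 := by
    rw [Nat.card_Icc, Nat.cast_sub (by omega)]
    push_cast
    ring
  rw [signDescentLoss, hφ, Icc_self, sum_singleton, Nat.cast_one, one_rpow, sum_const,
    nsmul_eq_mul, hcard, hsq, mul_div_assoc]

theorem tendsto_signDescentLoss_of_floor_eq_one {α τ φ : ℝ} (hα : 1 / 2 < α) (hτ : τ ≠ 0)
    (hφ : ⌊φ⌋₊ = 1) :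
    Tendsto (fun d : ℕ => signDescentLoss α d ((τ / 2) * √d) φ) atTop
      (nhds (((1 - φ ^ (-α)) ^ 2 + (φ ^ (-α)) ^ 2 / τ ^ 2) / (riemannZeta (2 * α : ℝ)).re)) := by
  set x := φ ^ (-α)
  have hnum : Tendsto (fun d : ℕ => (1 - x) ^ 2 + x ^ 2 / τ ^ 2 * (1 - 1 / (d : ℝ))) atTop
      (nhds ((1 - x) ^ 2 + x ^ 2 / τ ^ 2)) := by
    simpa using (((tendsto_one_div_atTop_nhds_zero_nat (𝕜 := ℝ)).const_sub 1).const_mul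
      (x ^ 2 / τ ^ 2)).const_add ((1 - x) ^ 2)
  have hden := tendsto_sum_Icc_rpow_neg_riemannZeta_re (s := 2 * α) (by linarith)
  refine (hnum.div hden (riemannZeta_re_pos_of_one_lt (by linarith)).ne').congr' ?_
  filter_upwards [eventually_ge_atTop 1] with d hd
  have hd0 : (d : ℝ) ≠ 0 := by positivity
  rw [Pi.div_apply, signDescentLoss_of_floor_eq_one hφ hd, mul_pow, sq_sqrt d.cast_nonneg]
  field_simp
  ring

/-- α > 1/2 case of the sign-descent scaling law: with `T_d = (τ/2)·√d` and
`φ_τ = (1 + 1/τ²)^{1/α}`, the normalized sign-descent loss converges to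
`1/(ζ(2α)(1 + τ²))`. -/
theorem stmt17 (α τ : ℝ) (hα : 1/2 < α) (hτ : 0 < τ)
    (hcond : 1 < τ ^ 2 * (2 ^ α - 1)) :
    Tendsto
      (fun d : ℕ =>
        ((∑ k ∈ Finset.Icc 1 ⌊(1 + 1 / τ ^ 2) ^ (1/α)⌋₊,
            ((k : ℝ) ^ (-α) - ((1 + 1 / τ ^ 2) ^ (1/α)) ^ (-α)) ^ 2) +
          ∑ k ∈ Finset.Icc (⌊(1 + 1 / τ ^ 2) ^ (1/α)⌋₊ + 1) d,
            ((1 + 1 / τ ^ 2) ^ (1/α)) ^ (-(2 * α)) /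
              (4 * ((τ / 2) * Real.sqrt d) ^ 2)) /
        (∑ k ∈ Finset.Icc 1 d, (k : ℝ) ^ (-(2 * α))))
      atTop
      (nhds (1 / ((riemannZeta ((2 * α : ℝ) : ℂ)).re * (1 + τ ^ 2)))) := by
  set B := 1 + 1 / τ ^ 2 with hB
  have hB1 : 1 ≤ B := le_add_of_nonneg_right (by positivity)
  have hB2 : B < 2 ^ α := by
    have : 1 / τ ^ 2 < 2 ^ α - 1 := by rw [div_lt_iff₀ (by positivity)]; linarith
    linarith
  have hlim := tendsto_signDescentLoss_of_floor_eq_one hα hτ.ne'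
    (floor_rpow_one_div_eq_one (by linarith) hB1 hB2)
  rw [rpow_one_div_rpow_neg (by linarith) (by linarith)] at hlim
  change Tendsto (fun d : ℕ => signDescentLoss α d ((τ / 2) * √d) (B ^ (1 / α))) atTop _
  convert hlim using 2
  rw [hB]
  field_simp
  ring
end
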